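/- Let F_1 = l_1 - l_2, F_2 = l_3 - l_4, F_3 = l_5 - l_6, F_4 = l_0 - l_2 - l_4 - l_6 be four pairwise-orthogonal (-2)-classes. The number of (-1)-classes D among the 56 with ⟨D, F_i⟩ = 0 for all i = 1,2,3,4 is exactly 8. -/
import Mathlib


/-- The intersection form of signature (1,7) on the Picard lattice `ℤ⁸`
of a degree-2 weak Del Pezzo surface. -/
def dpForm (x y : Fin 8 → ℤ) : ℤ :=
  x 0 * y 0 - ∑ i : Fin 7, x i.succ * y i.succ

/-- The canonical class `K = (-3, 1, 1, 1, 1, 1, 1, 1)`. -/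
def dpK : Fin 8 → ℤ := ![-3, 1, 1, 1, 1, 1, 1, 1]

/-- The basis classes `l i` (`l 0` the line class, `l i` the exceptional classes). -/
def l (i : Fin 8) : Fin 8 → ℤ := Pi.single i 1

/-- A `(-1)`-class: `D² = -1`, `⟨D, K⟩ = -1`, nonnegative leading coefficient. -/
def IsMinusOneClass (D : Fin 8 → ℤ) : Prop :=
  dpForm D D = -1 ∧ dpForm D dpK = -1 ∧ 0 ≤ D 0

/-- A `(-2)`-class: `F² = -2`, `⟨F, K⟩ = 0`, nonnegative leading coefficient. -/
def IsMinusTwoClass (F : Fin 8 → ℤ) : Prop :=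
  dpForm F F = -2 ∧ dpForm F dpK = 0 ∧ 0 ≤ F 0

lemma dpForm_eq (x y : Fin 8 → ℤ) :
    dpForm x y = x 0 * y 0 - (x 1 * y 1 + x 2 * y 2 + x 3 * y 3 + x 4 * y 4
      + x 5 * y 5 + x 6 * y 6 + x 7 * y 7) := by
  simp only [dpForm, Fin.sum_univ_seven]
  rfl

lemma eq_vec (D : Fin 8 → ℤ) (a b c d e f g h : ℤ) (h0 : D 0 = a) (h1 : D 1 = b)
    (h2 : D 2 = c) (h3 : D 3 = d) (h4 : D 4 = e) (h5 : D 5 = f) (h6 : D 6 = g)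
    (h7 : D 7 = h) : D = ![a, b, c, d, e, f, g, h] := by
  funext i; fin_cases i <;> assumption

lemma consec_nonneg (x : ℤ) : 0 ≤ x * (x + 1) := by
  rcases le_or_gt 0 x with h | h
  · exact mul_nonneg h (by linarith)
  · nlinarith [sq_nonneg (x + 1)]

/-- For the `(-2)`-classes `F₁ = l 1 - l 2`, `F₂ = l 3 - l 4`, `F₃ = l 5 - l 6`,
`F₄ = l 0 - l 2 - l 4 - l 6`, exactly `8` of the `56` `(-1)`-classes `D` satisfy
`⟨D, Fᵢ⟩ = 0` for all `i = 1, 2, 3, 4`. -/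
theorem card_minusOneClasses_4A1 :
    ({D : Fin 8 → ℤ | IsMinusOneClass D ∧
        dpForm D (l 1 - l 2) = 0 ∧ dpForm D (l 3 - l 4) = 0 ∧
        dpForm D (l 5 - l 6) = 0 ∧ dpForm D (l 0 - l 2 - l 4 - l 6) = 0} :
        Set (Fin 8 → ℤ)).ncard = 8 := by
  have hset : ({D : Fin 8 → ℤ | IsMinusOneClass D ∧
        dpForm D (l 1 - l 2) = 0 ∧ dpForm D (l 3 - l 4) = 0 ∧
        dpForm D (l 5 - l 6) = 0 ∧ dpForm D (l 0 - l 2 - l 4 - l 6) = 0} :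
        Set (Fin 8 → ℤ)) =
      ↑({![0,0,0,0,0,0,0,1], ![1,0,0,0,0,-1,-1,0], ![1,0,0,-1,-1,0,0,0],
         ![2,0,0,-1,-1,-1,-1,-1], ![1,-1,-1,0,0,0,0,0], ![2,-1,-1,0,0,-1,-1,-1],
         ![2,-1,-1,-1,-1,0,0,-1], ![3,-1,-1,-1,-1,-1,-1,-2]} :
        Finset (Fin 8 → ℤ)) := by
    ext D
    simp only [Set.mem_setOf_eq, Finset.coe_insert, Set.mem_insert_iff,
      Finset.coe_singleton, Set.mem_singleton_iff]
    constructor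
    · rintro ⟨⟨hsq, hK, hpos⟩, h1, h2, h3, h4⟩
      rw [dpForm_eq] at hsq
      simp only [dpForm_eq,
        show dpK 0 = -3 from rfl, show dpK 1 = 1 from rfl, show dpK 2 = 1 from rfl,
        show dpK 3 = 1 from rfl, show dpK 4 = 1 from rfl, show dpK 5 = 1 from rfl,
        show dpK 6 = 1 from rfl, show dpK 7 = 1 from rfl,
        show (l 1 - l 2) 0 = 0 from rfl, show (l 1 - l 2) 1 = 1 from rfl,
        show (l 1 - l 2) 2 = -1 from rfl, show (l 1 - l 2) 3 = 0 from rfl,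
        show (l 1 - l 2) 4 = 0 from rfl, show (l 1 - l 2) 5 = 0 from rfl,
        show (l 1 - l 2) 6 = 0 from rfl, show (l 1 - l 2) 7 = 0 from rfl,
        show (l 3 - l 4) 0 = 0 from rfl, show (l 3 - l 4) 1 = 0 from rfl,
        show (l 3 - l 4) 2 = 0 from rfl, show (l 3 - l 4) 3 = 1 from rfl,
        show (l 3 - l 4) 4 = -1 from rfl, show (l 3 - l 4) 5 = 0 from rfl,
        show (l 3 - l 4) 6 = 0 from rfl, show (l 3 - l 4) 7 = 0 from rfl,
        show (l 5 - l 6) 0 = 0 from rfl, show (l 5 - l 6) 1 = 0 from rfl,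
        show (l 5 - l 6) 2 = 0 from rfl, show (l 5 - l 6) 3 = 0 from rfl,
        show (l 5 - l 6) 4 = 0 from rfl, show (l 5 - l 6) 5 = 1 from rfl,
        show (l 5 - l 6) 6 = -1 from rfl, show (l 5 - l 6) 7 = 0 from rfl,
        show (l 0 - l 2 - l 4 - l 6) 0 = 1 from rfl, show (l 0 - l 2 - l 4 - l 6) 1 = 0 from rfl,
        show (l 0 - l 2 - l 4 - l 6) 2 = -1 from rfl, show (l 0 - l 2 - l 4 - l 6) 3 = 0 from rfl,
        show (l 0 - l 2 - l 4 - l 6) 4 = -1 from rfl, show (l 0 - l 2 - l 4 - l 6) 5 = 0 from rfl,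
        show (l 0 - l 2 - l 4 - l 6) 6 = -1 from rfl, show (l 0 - l 2 - l 4 - l 6) 7 = 0 from rfl]
        at hK h1 h2 h3 h4
      have e12 : D 1 = D 2 := by linarith
      have e34 : D 3 = D 4 := by linarith
      have e56 : D 5 = D 6 := by linarith
      have e0 : D 0 = -(D 2 + D 4 + D 6) := by linarith
      have e7 : D 7 = 1 + (D 2 + D 4 + D 6) := by linarith
      rw [e12, e34, e56, e7, e0] at hsq
      have key2 : 2 * (D 2 * (D 2 + 1) + D 4 * (D 4 + 1) + D 6 * (D 6 + 1)) = 0 := by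
        linear_combination -hsq
      have hc2 : D 2 = 0 ∨ D 2 = -1 := by
        have z : D 2 * (D 2 + 1) = 0 := by
          have n4 := consec_nonneg (D 4); have n6 := consec_nonneg (D 6)
          have n2 := consec_nonneg (D 2)
          linarith
        rcases mul_eq_zero.mp z with h | h
        · exact Or.inl h
        · exact Or.inr (by linarith)
      have hc4 : D 4 = 0 ∨ D 4 = -1 := by
        have z : D 4 * (D 4 + 1) = 0 := by
          have n4 := consec_nonneg (D 4); have n6 := consec_nonneg (D 6)
          have n2 := consec_nonneg (D 2)
          linarith
        rcases mul_eq_zero.mp z with h | h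
        · exact Or.inl h
        · exact Or.inr (by linarith)
      have hc6 : D 6 = 0 ∨ D 6 = -1 := by
        have z : D 6 * (D 6 + 1) = 0 := by
          have n4 := consec_nonneg (D 4); have n6 := consec_nonneg (D 6)
          have n2 := consec_nonneg (D 2)
          linarith
        rcases mul_eq_zero.mp z with h | h
        · exact Or.inl h
        · exact Or.inr (by linarith)
      rcases hc2 with p2 | p2 <;> rcases hc4 with p4 | p4 <;> rcases hc6 with p6 | p6
      · exact Or.inl (eq_vec D 0 0 0 0 0 0 0 1 (by omega) (by omega) (by omega)
          (by omega) (by omega) (by omega) (by omega) (by omega))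
      · exact Or.inr (Or.inl (eq_vec D 1 0 0 0 0 (-1) (-1) 0 (by omega) (by omega)
          (by omega) (by omega) (by omega) (by omega) (by omega) (by omega)))
      · exact Or.inr (Or.inr (Or.inl (eq_vec D 1 0 0 (-1) (-1) 0 0 0 (by omega)
          (by omega) (by omega) (by omega) (by omega) (by omega) (by omega) (by omega))))
      · exact Or.inr (Or.inr (Or.inr (Or.inl (eq_vec D 2 0 0 (-1) (-1) (-1) (-1) (-1)
          (by omega) (by omega) (by omega) (by omega) (by omega) (by omega) (by omega)
          (by omega)))))
      · exact Or.inr (Or.inr (Or.inr (Or.inr (Or.inl (eq_vec D 1 (-1) (-1) 0 0 0 0 0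
          (by omega) (by omega) (by omega) (by omega) (by omega) (by omega) (by omega)
          (by omega))))))
      · exact Or.inr (Or.inr (Or.inr (Or.inr (Or.inr (Or.inl (eq_vec D 2 (-1) (-1) 0 0
          (-1) (-1) (-1) (by omega) (by omega) (by omega) (by omega) (by omega)
          (by omega) (by omega) (by omega)))))))
      · exact Or.inr (Or.inr (Or.inr (Or.inr (Or.inr (Or.inr (Or.inl (eq_vec D 2 (-1)
          (-1) (-1) (-1) 0 0 (-1) (by omega) (by omega) (by omega) (by omega) (by omega)
          (by omega) (by omega) (by omega))))))))
      · exact Or.inr (Or.inr (Or.inr (Or.inr (Or.inr (Or.inr (Or.inr (eq_vec D 3 (-1)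
          (-1) (-1) (-1) (-1) (-1) (-2) (by omega) (by omega) (by omega) (by omega)
          (by omega) (by omega) (by omega) (by omega))))))))
    · rintro (rfl | rfl | rfl | rfl | rfl | rfl | rfl | rfl) <;>
        exact ⟨⟨by decide, by decide, by decide⟩, by decide, by decide, by decide, by decide⟩
  rw [hset, Set.ncard_coe_finset]
  decide
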